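/- arXiv:math/0701451 — 2 statements merged into one kernel-verified Lean document; each statement's English description precedes it below -/
import Mathlib

section
/- Let M be a complete Riemannian manifold without boundary and I a compact interval. The map W^{1,1}(I,M) → 𝒢(I,M), γ ↦ γ̄, which sends an absolutely continuous curve γ to the generalized curve γ̄ = dt ⊗ δ_{γ(t)} ⊗ δ_{γ̇(t)}, is continuous. -/
open MeasureTheory Filter Topology Set ENNReal

noncomputable section

/-!
Following the paper, the complete Riemannian manifold `M` without boundary is modelled
(via an isometric embedding into Euclidean space) on a finite-dimensional real inner
product space `E`, itself a complete Riemannian manifold without boundary; its tangent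
bundle is `TM = E × E` with `‖v‖ₓ = ‖v‖`.  A point of `I × TM` is `p = (t, x, v)`.
The Kantorovich–Rubinstein topology of `𝒴₁(I, TM)` is expressed through (sequential)
convergence of integrals of continuous functions with at most linear growth in `v`,
using the paper's normalisation that `(1 + d((x₀,0),(x,v)))/(1 + ‖v‖ₓ)` is bounded
above and below.
-/

variable {E : Type*} [NormedAddCommGroup E] [InnerProductSpace ℝ E]
  [FiniteDimensional ℝ E] [MeasurableSpace E] [BorelSpace E]

/-- Normalized Lebesgue measure on the interval `[a,b]`. -/
def lam (a b : ℝ) : Measure ℝ := (ENNReal.ofReal (b - a))⁻¹ • (volume.restrict (Icc a b))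

/-- Young measures with finite first moment: probability measures on `I × TM`
whose marginal on `I` is the normalized Lebesgue measure `lam a b`. -/
def IsYoung1 (a b : ℝ) (η : Measure (ℝ × E × E)) : Prop :=
  IsProbabilityMeasure η ∧ η.map Prod.fst = lam a b ∧
    Integrable (fun p : ℝ × E × E => ‖p.2.2‖) η

/-- Convergence in the Kantorovich–Rubinstein space `𝒴₁(I,TM)`: integrals of all
continuous functions with at most linear growth converge. -/
def Y1Tendsto (ηs : ℕ → Measure (ℝ × E × E)) (η : Measure (ℝ × E × E)) : Prop :=
  ∀ f : ℝ × E × E → ℝ, Continuous f → (∃ C : ℝ, ∀ p, |f p| ≤ C * (1 + ‖p.2.2‖)) →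
    Tendsto (fun n => ∫ p, f p ∂(ηs n)) atTop (𝓝 (∫ p, f p ∂η))

/-- Smooth test function compactly supported in `]a,b[ × M`. -/
def IsTestInterior (a b : ℝ) (g : ℝ → E → ℝ) : Prop :=
  ContDiff ℝ (⊤ : ℕ∞) (Function.uncurry g) ∧ HasCompactSupport (Function.uncurry g) ∧
    tsupport (Function.uncurry g) ⊆ Ioo a b ×ˢ (univ : Set E)

/-- Smooth test function compactly supported in `[a,b] × M`. -/
def IsTestClosed (g : ℝ → E → ℝ) : Prop :=
  ContDiff ℝ (⊤ : ℕ∞) (Function.uncurry g) ∧ HasCompactSupport (Function.uncurry g)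

/-- The integrand `∂ₜ g + ∂ₓ g · v` at the point `p = (t, x, v)`. -/
def tIntegrand (g : ℝ → E → ℝ) (p : ℝ × E × E) : ℝ :=
  deriv (fun s => g s p.2.1) p.1 + fderiv ℝ (fun y => g p.1 y) p.2.1 p.2.2

/-- Transport measures on `I = [a,b]`. -/
def IsTransport (a b : ℝ) (η : Measure (ℝ × E × E)) : Prop :=
  IsYoung1 a b η ∧ ∀ g : ℝ → E → ℝ, IsTestInterior a b g → ∫ p, tIntegrand g p ∂η = 0

/-- Transport measures between `μi` and `μf`. -/
def IsTransportBetween (a b : ℝ) (η : Measure (ℝ × E × E)) (μi μf : Measure E) : Prop :=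
  IsYoung1 a b η ∧ ∀ g : ℝ → E → ℝ, IsTestClosed g →
    ∫ p, tIntegrand g p ∂η = (∫ x, g b x ∂μf) - ∫ x, g a x ∂μi

/-- `η` is a generalized curve above the continuous curve `γ`: it is a transport
measure whose time-`t` marginals on `M` are the Dirac measures `δ_{γ(t)}`,
i.e. its `(t,x)`-marginal is `dt ⊗ δ_{γ(t)}`. -/
def IsGenCurve (a b : ℝ) (η : Measure (ℝ × E × E)) (γ : ℝ → E) : Prop :=
  IsTransport a b η ∧ ContinuousOn γ (Icc a b) ∧
    η.map (fun p => (p.1, p.2.1)) = (lam a b).map (fun t => (t, γ t))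

/-- `γ` is absolutely continuous on `[a,b]` with derivative `γ'`. -/
def IsACCurve (a b : ℝ) (γ γ' : ℝ → E) : Prop :=
  IntervalIntegrable γ' volume a b ∧ ∀ t ∈ Icc a b, γ t = γ a + ∫ s in a..t, γ' s

/-- The measure `γ̄ = dt ⊗ δ_{γ(t)} ⊗ δ_{γ̇(t)}` associated with a curve. -/
def curveMeasure (a b : ℝ) (γ γ' : ℝ → E) : Measure (ℝ × E × E) :=
  (lam a b).map (fun t => (t, γ t, γ' t))

/-- The nonnegative part of an extended real, as an `ℝ≥0∞`. -/
def epos (x : EReal) : ℝ≥0∞ := if x = ⊤ then ⊤ else ENNReal.ofReal x.toReal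

/-- The integral of an `EReal`-valued function: positive part minus negative part. -/
def eInt {α : Type*} [MeasurableSpace α] (μ : Measure α) (f : α → EReal) : EReal :=
  ((∫⁻ x, epos (f x) ∂μ : ℝ≥0∞) : EReal) - ((∫⁻ x, epos (-f x) ∂μ : ℝ≥0∞) : EReal)

/-- Normal integrand: Borel measurable and lower semicontinuous in `(x,v)`. -/
def IsNormalIntegrand (L : ℝ × E × E → EReal) : Prop :=
  Measurable L ∧ ∀ t : ℝ, LowerSemicontinuous (fun q : E × E => L (t, q.1, q.2))

/-- Fiberwise convexity: `v ↦ L (t, x, v)` is convex for each fixed `(t,x)`. -/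
def FiberwiseConvex (L : ℝ × E × E → EReal) : Prop :=
  ∀ (t : ℝ) (x v w : E) (θ₁ θ₂ : ℝ), 0 ≤ θ₁ → 0 ≤ θ₂ → θ₁ + θ₂ = 1 →
    L (t, x, θ₁ • v + θ₂ • w) ≤ (θ₁ : EReal) * L (t, x, v) + (θ₂ : EReal) * L (t, x, w)

lemma genDCT {α : Type*} [MeasurableSpace α] {ν : Measure α}
    (φ : ℕ → α → ℝ) (g : α → ℝ) (h : ℕ → α → ℝ)
    (hφm : ∀ n, AEStronglyMeasurable (φ n) ν)
    (hg : Integrable g ν) (hg0 : 0 ≤ g)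
    (hh : ∀ n, Integrable (h n) ν) (hh0 : ∀ n x, 0 ≤ h n x)
    (hφ0 : ∀ n x, 0 ≤ φ n x)
    (hb : ∀ n x, φ n x ≤ g x + h n x)
    (hhL : Tendsto (fun n => ∫ x, h n x ∂ν) atTop (𝓝 0))
    (hhae : ∀ᵐ x ∂ν, Tendsto (fun n => h n x) atTop (𝓝 0))
    (hφae : ∀ᵐ x ∂ν, Tendsto (fun n => φ n x) atTop (𝓝 0)) :
    Tendsto (fun n => ∫ x, φ n x ∂ν) atTop (𝓝 0) := by
  set Φ : ℕ → ℝ≥0∞ := fun n => ∫⁻ x, ENNReal.ofReal (φ n x) ∂ν with hΦ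
  have hgm := hg.aestronglyMeasurable.aemeasurable
  have hψm : ∀ n, AEMeasurable (fun x => ENNReal.ofReal (g x + h n x - φ n x)) ν := fun n =>
    (((hgm.add (hh n).aestronglyMeasurable.aemeasurable).sub
      (hφm n).aemeasurable)).ennreal_ofReal
  set ψ : ℕ → ℝ≥0∞ := fun n => ∫⁻ x, ENNReal.ofReal (g x + h n x - φ n x) ∂ν with hψ
  set L : ℝ≥0∞ := ∫⁻ x, ENNReal.ofReal (g x) ∂ν with hL
  have hLfin : L ≠ ⊤ := by
    rw [hL, ← ofReal_integral_eq_lintegral_ofReal hg (Filter.Eventually.of_forall hg0)]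
    exact ENNReal.ofReal_ne_top
  set En : ℕ → ℝ≥0∞ := fun n => ENNReal.ofReal (∫ x, h n x ∂ν) with hEn
  have hEnL : Tendsto En atTop (𝓝 0) := by
    have := ENNReal.tendsto_ofReal hhL
    simpa using this
  -- ψ n + Φ n = L + En n
  have hsum : ∀ n, ψ n + Φ n = L + En n := by
    intro n
    have h1 : ψ n + Φ n = ∫⁻ x, ENNReal.ofReal (g x + h n x) ∂ν := by
      rw [hψ, hΦ, ← lintegral_add_left' (hψm n)]
      refine lintegral_congr fun x => ?_
      rw [← ENNReal.ofReal_add (by linarith [hb n x]) (hφ0 n x)]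
      ring_nf
    have h2 : (∫⁻ x, ENNReal.ofReal (g x + h n x) ∂ν)
        = L + ENNReal.ofReal (∫ x, h n x ∂ν) := by
      rw [hL, ofReal_integral_eq_lintegral_ofReal (hh n)
        (Filter.Eventually.of_forall (hh0 n)), ← lintegral_add_left' hgm.ennreal_ofReal]
      exact lintegral_congr fun x => ENNReal.ofReal_add (hg0 x) (hh0 n x)
    rw [h1, h2]
  have hψle : ∀ n, ψ n ≤ L + En n := fun n => (hsum n) ▸ le_add_right le_rfl
  have hψfin : ∀ n, ψ n ≠ ⊤ := fun n =>
    ((hψle n).trans_lt (by simp [hLfin.lt_top, ENNReal.ofReal_lt_top, hEn])).ne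
  have hΦeq : ∀ n, Φ n = (L + En n) - ψ n := fun n =>
    ENNReal.eq_sub_of_add_eq (hψfin n) (by rw [add_comm, hsum n])
  -- Fatou
  have hfatou : L ≤ atTop.liminf ψ := by
    have h1 : (∫⁻ x, atTop.liminf (fun n => ENNReal.ofReal (g x + h n x - φ n x)) ∂ν) = L := by
      refine lintegral_congr_ae ?_
      filter_upwards [hhae, hφae] with x hx1 hx2
      have : Tendsto (fun n => ENNReal.ofReal (g x + h n x - φ n x)) atTop
          (𝓝 (ENNReal.ofReal (g x))) := by
        have : Tendsto (fun n => g x + h n x - φ n x) atTop (𝓝 (g x)) := by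
          have := (tendsto_const_nhds (x := g x)).add hx1 |>.sub hx2
          simpa using this
        exact ENNReal.tendsto_ofReal this
      exact this.liminf_eq
    calc L = _ := h1.symm
    _ ≤ atTop.liminf ψ := lintegral_liminf_le' hψm
  -- conclude Tendsto Φ 0
  have hΦ0 : Tendsto Φ atTop (𝓝 0) := by
    rw [ENNReal.tendsto_nhds_zero]
    intro ε hε
    have hε2 : (0:ℝ≥0∞) < ε / 2 := ENNReal.half_pos hε.ne' |>.trans_le le_rfl
    have hev1 : ∀ᶠ n in atTop, En n ≤ ε / 2 :=
      hEnL.eventually_le_const hε2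
    have hev2 : ∀ᶠ n in atTop, L ≤ ψ n + ε / 2 := by
      by_cases hL0 : L = 0
      · exact Filter.Eventually.of_forall fun n => by simp [hL0]
      · have hlt : L - ε / 2 < L := ENNReal.sub_lt_self hLfin hL0 hε2.ne'
        filter_upwards [eventually_lt_of_lt_liminf (hlt.trans_le hfatou)] with n hn
        exact tsub_le_iff_right.mp hn.le
    filter_upwards [hev1, hev2] with n h1 h2
    rw [hΦeq n]
    refine tsub_le_iff_right.mpr ?_
    calc L + En n ≤ (ψ n + ε / 2) + ε / 2 := add_le_add h2 h1
    _ = ε + ψ n := by rw [add_assoc, ENNReal.add_halves, add_comm]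
  have : ∀ n, ∫ x, φ n x ∂ν = (Φ n).toReal := fun n =>
    integral_eq_lintegral_of_nonneg_ae (Filter.Eventually.of_forall (hφ0 n)) (hφm n)
  simp_rw [this]
  have := (ENNReal.tendsto_toReal (by simp : (0:ℝ≥0∞) ≠ ⊤)).comp hΦ0
  simpa [Function.comp_def] using this

lemma acMeas {E : Type*} [NormedAddCommGroup E] [InnerProductSpace ℝ E]
    [FiniteDimensional ℝ E] [MeasurableSpace E] [BorelSpace E]
    {a b : ℝ} (hab : a ≤ b) {γ γ' : ℝ → E} (h : IsACCurve a b γ γ') :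
    AEStronglyMeasurable γ (volume.restrict (Icc a b)) ∧
      Integrable γ' (volume.restrict (Icc a b)) := by
  have hνIoc : volume.restrict (Icc a b) = volume.restrict (Ioc a b) :=
    (Measure.restrict_congr_set Ioc_ae_eq_Icc).symm
  constructor
  · have h1 : ContinuousOn (fun t => γ a + ∫ s in a..t, γ' s) (Icc a b) := by
      have := intervalIntegral.continuousOn_primitive_interval' h.1 left_mem_uIcc
      rw [uIcc_of_le hab] at this
      exact continuousOn_const.add this
    have h2 : ContinuousOn γ (Icc a b) := h1.congr fun t ht => h.2 t ht
    exact h2.aestronglyMeasurable measurableSet_Icc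
  · rw [hνIoc]; exact h.1.1

/-- The map `W^{1,1}(I,M) → 𝒢(I,M)`, `γ ↦ γ̄ = dt ⊗ δ_{γ(t)} ⊗ δ_{γ̇(t)}`, is
(sequentially) continuous: if `γₙ → γ` in `W^{1,1}`, i.e. the functions
`t ↦ d((γₙ(t),γ̇ₙ(t)),(γ(t),γ̇(t)))` tend to `0` in `L¹` (with the paper's distance
`d((x,v),(x',v')) = min(1,|x'-x|) + |v'-v|`), then `γ̄ₙ → γ̄` in `𝒴₁(I,TM)`. -/
theorem curveMeasure_continuous
    {E : Type*} [NormedAddCommGroup E] [InnerProductSpace ℝ E]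
    [FiniteDimensional ℝ E] [MeasurableSpace E] [BorelSpace E]
    (a b : ℝ) (hab : a < b)
    (γs γs' : ℕ → ℝ → E) (γ γ' : ℝ → E)
    (hACn : ∀ n, IsACCurve a b (γs n) (γs' n)) (hAC : IsACCurve a b γ γ')
    (hW11 : Tendsto
      (fun n => ∫ t in Icc a b, (min 1 ‖γs n t - γ t‖ + ‖γs' n t - γ' t‖))
      atTop (𝓝 0)) :
    Y1Tendsto (fun n => curveMeasure a b (γs n) (γs' n)) (curveMeasure a b γ γ') := by
  intro f hf hCex
  obtain ⟨C, hC⟩ := hCex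
  have hC0 : 0 ≤ C := by
    have h1 := hC (0, 0, 0)
    simp only [norm_zero] at h1
    have := abs_nonneg (f (0,0,0))
    linarith
  set ν : Measure ℝ := volume.restrict (Icc a b) with hν
  have hγm : AEStronglyMeasurable γ ν := (acMeas hab.le hAC).1
  have hγ'i : Integrable γ' ν := (acMeas hab.le hAC).2
  have hγnm : ∀ n, AEStronglyMeasurable (γs n) ν := fun n => (acMeas hab.le (hACn n)).1
  have hγ'ni : ∀ n, Integrable (γs' n) ν := fun n => (acMeas hab.le (hACn n)).2
  have hγ'm : AEStronglyMeasurable γ' ν := hγ'i.aestronglyMeasurable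
  have hγ'nm : ∀ n, AEStronglyMeasurable (γs' n) ν := fun n => (hγ'ni n).aestronglyMeasurable
  -- the composed integrands
  set F : ℕ → ℝ → ℝ := fun n t => f (t, γs n t, γs' n t) with hF
  set F₀ : ℝ → ℝ := fun t => f (t, γ t, γ' t) with hF₀
  have hFm : ∀ n, AEStronglyMeasurable (F n) ν := fun n =>
    hf.comp_aestronglyMeasurable
      (aestronglyMeasurable_id.prodMk ((hγnm n).prodMk (hγ'nm n)))
  have hF₀m : AEStronglyMeasurable F₀ ν :=
    hf.comp_aestronglyMeasurable (aestronglyMeasurable_id.prodMk (hγm.prodMk hγ'm))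
  have hFi : ∀ n, Integrable (F n) ν := by
    intro n
    refine Integrable.mono' (g := fun t => C * (1 + ‖γs' n t‖))
      (((integrable_const (1:ℝ)).add (hγ'ni n).norm).const_mul C) (hFm n) ?_
    exact Filter.Eventually.of_forall fun t => by
      simpa [Real.norm_eq_abs] using hC (t, γs n t, γs' n t)
  have hF₀i : Integrable F₀ ν := by
    refine Integrable.mono' (g := fun t => C * (1 + ‖γ' t‖))
      (((integrable_const (1:ℝ)).add hγ'i.norm).const_mul C) hF₀m ?_
    exact Filter.Eventually.of_forall fun t => by
      simpa [Real.norm_eq_abs] using hC (t, γ t, γ' t)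
  -- the W11 deviation
  set h : ℕ → ℝ → ℝ := fun n t => min 1 ‖γs n t - γ t‖ + ‖γs' n t - γ' t‖ with hh
  have hh0 : ∀ n t, 0 ≤ h n t := fun n t =>
    add_nonneg (le_min zero_le_one (norm_nonneg _)) (norm_nonneg _)
  have hhm : ∀ n, AEStronglyMeasurable (h n) ν := by
    intro n
    exact ((continuous_const.min continuous_id).comp_aestronglyMeasurable
        (((hγnm n).sub hγm).norm)).add (((hγ'nm n).sub hγ'm).norm)
  have hhi : ∀ n, Integrable (h n) ν := by
    intro n
    refine Integrable.add ?_ ((hγ'ni n).sub hγ'i).norm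
    refine Integrable.mono' (integrable_const (1:ℝ))
      ((continuous_const.min continuous_id).comp_aestronglyMeasurable
        (((hγnm n).sub hγm).norm)) ?_
    refine Filter.Eventually.of_forall fun t => ?_
    rw [Real.norm_eq_abs, abs_le]
    constructor
    · have := le_min (zero_le_one (α := ℝ)) (norm_nonneg (γs n t - γ t)); linarith
    · exact min_le_left _ _
  -- main convergence over ν
  have key : Tendsto (fun n => ∫ t, F n t ∂ν) atTop (𝓝 (∫ t, F₀ t ∂ν)) := by
    refine tendsto_of_subseq_tendsto fun ns hns => ?_
    -- convergence in measure of h ∘ ns, hence an a.e. convergent subsequence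
    have helpn : ∀ m, eLpNorm (h m) 1 ν = ENNReal.ofReal (∫ t, h m t ∂ν) := by
      intro m
      rw [eLpNorm_one_eq_lintegral_enorm,
        ofReal_integral_eq_lintegral_ofReal (hhi m) (Filter.Eventually.of_forall (hh0 m))]
      exact lintegral_congr fun t => Real.enorm_eq_ofReal (hh0 m t)
    have hL2 : Tendsto (fun k => ∫ t, h (ns k) t ∂ν) atTop (𝓝 0) := hW11.comp hns
    have hTiM : TendstoInMeasure ν (fun k => h (ns k)) atTop 0 := by
      refine tendstoInMeasure_of_tendsto_eLpNorm (p := 1) one_ne_zero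
        (fun k => hhm (ns k)) aestronglyMeasurable_const ?_
      have h0 : Tendsto (fun k => ENNReal.ofReal (∫ t, h (ns k) t ∂ν)) atTop (𝓝 0) := by
        have := ENNReal.tendsto_ofReal hL2
        simpa using this
      refine Tendsto.congr (fun m => ?_) h0
      rw [sub_zero]
      exact (helpn _).symm
    obtain ⟨ms, hms, hmsae⟩ := hTiM.exists_seq_tendsto_ae
    set k : ℕ → ℕ := fun i => ns (ms i) with hk
    have hkT : Tendsto k atTop atTop := hns.comp hms.tendsto_atTop
    have hmsae' : ∀ᵐ t ∂ν, Tendsto (fun i => h (k i) t) atTop (𝓝 0) := by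
      filter_upwards [hmsae] with t ht using by simpa using ht
    -- a.e. convergence of F (k i) to F₀
    have haeF : ∀ᵐ t ∂ν, Tendsto (fun i => F (k i) t) atTop (𝓝 (F₀ t)) := by
      filter_upwards [hmsae'] with t ht
      have h1 : Tendsto (fun i => min 1 ‖γs (k i) t - γ t‖) atTop (𝓝 0) :=
        squeeze_zero (fun i => le_min zero_le_one (norm_nonneg _))
          (fun i => le_add_of_nonneg_right (norm_nonneg _)) ht
      have h2 : Tendsto (fun i => ‖γs' (k i) t - γ' t‖) atTop (𝓝 0) :=
        squeeze_zero (fun i => norm_nonneg _)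
          (fun i => le_add_of_nonneg_left (le_min zero_le_one (norm_nonneg _))) ht
      have h1' : Tendsto (fun i => ‖γs (k i) t - γ t‖) atTop (𝓝 0) := by
        refine h1.congr' ?_
        filter_upwards [h1.eventually_lt_const zero_lt_one] with i hi
        have hlt : ‖γs (k i) t - γ t‖ < 1 := by
          by_contra hx
          push_neg at hx
          rw [min_eq_left hx] at hi
          exact lt_irrefl _ hi
        exact min_eq_right hlt.le
      have hx : Tendsto (fun i => γs (k i) t) atTop (𝓝 (γ t)) :=
        tendsto_iff_norm_sub_tendsto_zero.mpr h1'
      have hv : Tendsto (fun i => γs' (k i) t) atTop (𝓝 (γ' t)) :=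
        tendsto_iff_norm_sub_tendsto_zero.mpr h2
      exact (hf.tendsto (t, γ t, γ' t)).comp
        (tendsto_const_nhds.prodMk_nhds (hx.prodMk_nhds hv))
    -- generalized dominated convergence
    have hgen : Tendsto (fun i => ∫ t, ‖F (k i) t - F₀ t‖ ∂ν) atTop (𝓝 0) := by
      refine genDCT (fun i t => ‖F (k i) t - F₀ t‖) (fun t => 2 * C * (1 + ‖γ' t‖))
        (fun i t => C * h (k i) t)
        (fun i => ((hFm (k i)).sub hF₀m).norm)
        (((integrable_const (1:ℝ)).add hγ'i.norm).const_mul (2 * C))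
        (fun t => by positivity)
        (fun i => (hhi (k i)).const_mul C)
        (fun i t => mul_nonneg hC0 (hh0 _ t))
        (fun i t => norm_nonneg _) ?_ ?_ ?_ ?_
      · intro i t
        show ‖F (k i) t - F₀ t‖ ≤ 2 * C * (1 + ‖γ' t‖) + C * h (k i) t
        have T : |F (k i) t - F₀ t| ≤ |F (k i) t| + |F₀ t| := by
          simpa [Real.norm_eq_abs] using norm_sub_le (F (k i) t) (F₀ t)
        have A1 : |F (k i) t| ≤ C * (1 + ‖γs' (k i) t‖) := by
          simpa using hC (t, γs (k i) t, γs' (k i) t)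
        have A2 : |F₀ t| ≤ C * (1 + ‖γ' t‖) := by simpa using hC (t, γ t, γ' t)
        have A3 : ‖γs' (k i) t‖ ≤ ‖γ' t‖ + ‖γs' (k i) t - γ' t‖ := by
          simpa using norm_add_le (γ' t) (γs' (k i) t - γ' t)
        have A4 : ‖γs' (k i) t - γ' t‖ ≤ h (k i) t :=
          le_add_of_nonneg_left (le_min zero_le_one (norm_nonneg _))
        have A6 : C * (1 + ‖γs' (k i) t‖) ≤ C * (1 + ‖γ' t‖ + h (k i) t) :=
          mul_le_mul_of_nonneg_left (by linarith) hC0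
        rw [Real.norm_eq_abs]
        nlinarith [hh0 (k i) t]
      · have : Tendsto (fun i => C * ∫ t, h (k i) t ∂ν) atTop (𝓝 (C * 0)) :=
          (hW11.comp hkT).const_mul C
        simpa [MeasureTheory.integral_const_mul] using this
      · filter_upwards [hmsae'] with t ht
        simpa using ht.const_mul C
      · filter_upwards [haeF] with t ht
        have := (ht.sub (tendsto_const_nhds (x := F₀ t))).norm
        simpa using this
    refine ⟨ms, ?_⟩
    rw [← tendsto_sub_nhds_zero_iff]
    refine squeeze_zero_norm (fun i => ?_) hgen
    rw [← integral_sub (hFi (k i)) hF₀i]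
    exact norm_integral_le_integral_norm _
  -- transfer to the mapped measures
  have hmap : ∀ (u u' : ℝ → E), AEStronglyMeasurable u ν → AEStronglyMeasurable u' ν →
      ∫ p, f p ∂(curveMeasure a b u u')
        = ((ENNReal.ofReal (b - a))⁻¹).toReal • ∫ t, f (t, u t, u' t) ∂ν := by
    intro u u' hu hu'
    have hφ : AEMeasurable (fun t => (t, u t, u' t)) (lam a b) := by
      have : AEMeasurable (fun t => (t, u t, u' t)) ν :=
        aemeasurable_id.prodMk (hu.aemeasurable.prodMk hu'.aemeasurable)
      exact this.smul_measure _
    rw [curveMeasure, integral_map hφ hf.aestronglyMeasurable, lam, integral_smul_measure]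
  simp_rw [hmap _ _ (hγnm _) (hγ'nm _), hmap _ _ hγm hγ'm]
  exact key.const_smul _
end
end

section
/- Let η ∈ 𝒴₁(I,TM) be a Young measure on the tangent bundle of a complete Riemannian manifold M, let μ be its image under the projection I×TM → I×M, let η = μ ⊗ η_{t,x} be a disintegration over this projection, and define the Borel vector field V(t,x) = ∫_{T_xM} v dη_{t,x}(v), which satisfies ∫ ‖V(t,x)‖_x dμ < ∞. Then η is a transport measure if and only if the continuity equation ∂_t μ + div(Vμ) = 0 holds in the sense of distributions, i.e., ∫_{I×M} (∂_t g(t,x) + ∂_x g(t,x)·V(t,x)) dμ(t,x) = 0 for all smooth compactly supported test functions g on the interior of I times M. -/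
open MeasureTheory Filter Topology Set ENNReal

noncomputable section

/-!
Following the paper, the complete Riemannian manifold `M` without boundary is modelled
(via an isometric embedding into Euclidean space) on a finite-dimensional real inner
product space `E`, itself a complete Riemannian manifold without boundary; its tangent
bundle is `TM = E × E` with `‖v‖ₓ = ‖v‖`.  A point of `I × TM` is `p = (t, x, v)`.
The Kantorovich–Rubinstein topology of `𝒴₁(I, TM)` is expressed through (sequential)
convergence of integrals of continuous functions with at most linear growth in `v`,
using the paper's normalisation that `(1 + d((x₀,0),(x,v)))/(1 + ‖v‖ₓ)` is bounded
above and below.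
-/

variable {E : Type*} [NormedAddCommGroup E] [InnerProductSpace ℝ E]
  [FiniteDimensional ℝ E] [MeasurableSpace E] [BorelSpace E]

open scoped ProbabilityTheory

/-- Pointwise identity: the transport integrand is the full differential applied to `(1, v)`. -/
lemma tIntegrand_eq {E : Type*} [NormedAddCommGroup E] [InnerProductSpace ℝ E]
    {g : ℝ → E → ℝ} (hG : ContDiff ℝ (⊤ : ℕ∞) (Function.uncurry g)) (t : ℝ) (x v : E) :
    deriv (fun s => g s x) t + fderiv ℝ (fun y => g t y) x v
      = fderiv ℝ (Function.uncurry g) (t, x) (1, v) := by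
  have hd : DifferentiableAt ℝ (Function.uncurry g) (t, x) :=
    (hG.differentiable (by simp)) (t, x)
  set L := fderiv ℝ (Function.uncurry g) (t, x) with hL
  have h1 : HasDerivAt (fun s => g s x) (L (1, 0)) t := by
    have := hd.hasFDerivAt.comp_hasDerivAt t
      ((hasDerivAt_id t).prodMk (hasDerivAt_const t x))
    exact this
  have h2 : HasFDerivAt (fun y => g t y)
      (L.comp (((0 : E →L[ℝ] ℝ)).prod (ContinuousLinearMap.id ℝ E))) x := by
    have := hd.hasFDerivAt.comp x
      ((hasFDerivAt_const t x).prodMk (hasFDerivAt_id x))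
    exact this
  rw [h1.deriv, h2.fderiv]
  have : L (1, 0) + L (0, v) = L (1, v) := by
    rw [← map_add]; norm_num
  simpa using this

/-- Let `η ∈ 𝒴₁(I,TM)`, let `μ` be its image under the projection `I×TM → I×M`,
let `η = μ ⊗ η_{t,x}` be a disintegration over this projection, and let
`V(t,x) = ∫ v dη_{t,x}(v)` be the associated Borel vector field, which satisfies
`∫ ‖V‖ dμ < ∞`.  Then `η` is a transport measure iff the continuity equation
`∂ₜ μ + div (V μ) = 0` holds in the sense of distributions. -/
theorem transport_iff_continuity_equation
    {E : Type*} [NormedAddCommGroup E] [InnerProductSpace ℝ E]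
    [FiniteDimensional ℝ E] [MeasurableSpace E] [BorelSpace E]
    (a b : ℝ) (hab : a < b)
    (η : Measure (ℝ × E × E)) (hY : IsYoung1 a b η)
    (μ : Measure (ℝ × E)) (hμ : μ = η.map (fun p : ℝ × E × E => (p.1, p.2.1)))
    (K : ℝ × E → Measure E) (hKmeas : Measurable K)
    (hKprob : ∀ q : ℝ × E, IsProbabilityMeasure (K q))
    (hdisint : η = μ.bind (fun q : ℝ × E => (K q).map (fun v : E => (q.1, q.2, v))))
    (V : ℝ × E → E) (hV : ∀ q : ℝ × E, V q = ∫ v, v ∂(K q))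
    (hVint : Integrable (fun q => ‖V q‖) μ) :
    IsTransport a b η ↔
      ∀ g : ℝ → E → ℝ, IsTestInterior a b g →
        ∫ q, (deriv (fun s => g s q.2) q.1 + fderiv ℝ (fun y => g q.1 y) q.2 (V q)) ∂μ
          = 0 := by

  classical
  haveI hηprob : IsProbabilityMeasure η := hY.1
  have hproj : Measurable (fun p : ℝ × E × E => (p.1, p.2.1)) :=
    measurable_fst.prodMk measurable_snd.fst
  haveI hμprob : IsProbabilityMeasure μ := by
    rw [hμ]; exact Measure.isProbabilityMeasure_map hproj.aemeasurable
  set κ : ProbabilityTheory.Kernel (ℝ × E) E := ⟨K, hKmeas⟩ with hκdef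
  haveI : ProbabilityTheory.IsMarkovKernel κ := ⟨hKprob⟩
  have hψ : Measurable (fun r : (ℝ × E) × E => (r.1.1, r.1.2, r.2)) :=
    measurable_fst.fst.prodMk (measurable_fst.snd.prodMk measurable_snd)
  have hη2 : η = ((μ ⊗ₘ κ).map fun r : (ℝ × E) × E => (r.1.1, r.1.2, r.2)) := by
    rw [hdisint]
    ext s hs
    have hm : Measurable fun q : ℝ × E => (K q).map (fun v => (q.1, q.2, v)) := by
      apply Measure.measurable_of_measurable_coe
      intro t ht
      have h1 : ∀ q : ℝ × E, ((K q).map (fun v => (q.1, q.2, v))) t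
          = κ q (Prod.mk q ⁻¹' ((fun r : (ℝ × E) × E => (r.1.1, r.1.2, r.2)) ⁻¹' t)) := by
        intro q
        rw [Measure.map_apply (show Measurable fun v : E => (q.1, q.2, v) from measurable_prodMk_left.comp measurable_prodMk_left) ht]
        rfl
      simp_rw [h1]
      exact ProbabilityTheory.Kernel.measurable_kernel_prodMk_left (hψ ht)
    rw [Measure.bind_apply hs hm.aemeasurable, Measure.map_apply hψ hs,
      Measure.compProd_apply (hψ hs)]
    refine lintegral_congr fun q => ?_
    rw [Measure.map_apply (show Measurable fun v : E => (q.1, q.2, v) from measurable_prodMk_left.comp measurable_prodMk_left) hs]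
    rfl
  have hKae : ∀ᵐ q ∂μ, Integrable (fun v : E => v) (K q) := by
    have hfin : (∫⁻ p : ℝ × E × E, (‖p.2.2‖₊ : ℝ≥0∞) ∂η) < ⊤ := by
      have := hY.2.2.hasFiniteIntegral
      simpa [HasFiniteIntegral, enorm_eq_nnnorm] using this
    rw [hη2, lintegral_map measurable_snd.snd.nnnorm.coe_nnreal_ennreal hψ,
      Measure.lintegral_compProd measurable_snd.nnnorm.coe_nnreal_ennreal] at hfin
    have hmeas : Measurable fun q : ℝ × E => ∫⁻ v, (‖v‖₊ : ℝ≥0∞) ∂κ q :=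
      Measurable.lintegral_kernel measurable_nnnorm.coe_nnreal_ennreal
    filter_upwards [ae_lt_top hmeas hfin.ne] with q hq
    refine ⟨aestronglyMeasurable_id, ?_⟩
    exact hq
  have main : ∀ g : ℝ → E → ℝ, IsTestInterior a b g →
      ∫ p, tIntegrand g p ∂η
        = ∫ q, (deriv (fun s => g s q.2) q.1
            + fderiv ℝ (fun y => g q.1 y) q.2 (V q)) ∂μ := by
    intro g hg
    obtain ⟨hG, hsupp, -⟩ := hg
    set f : ℝ × E × E → ℝ :=
      fun p => fderiv ℝ (Function.uncurry g) (p.1, p.2.1) ((1 : ℝ), p.2.2) with hfdef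
    have hti : ∀ p : ℝ × E × E, tIntegrand g p = f p := fun p =>
      tIntegrand_eq hG p.1 p.2.1 p.2.2
    obtain ⟨C₀, hC₀⟩ :=
      (hG.continuous_fderiv (by simp)).bounded_above_of_compact_support (hsupp.fderiv ℝ)
    set C := max C₀ 0 with hCdef
    have hC : ∀ z, ‖fderiv ℝ (Function.uncurry g) z‖ ≤ C :=
      fun z => (hC₀ z).trans (le_max_left _ _)
    have hbound : ∀ p : ℝ × E × E, ‖f p‖ ≤ C * (1 + ‖p.2.2‖) := by
      intro p
      calc ‖f p‖ ≤ ‖fderiv ℝ (Function.uncurry g) (p.1, p.2.1)‖ * ‖((1 : ℝ), p.2.2)‖ :=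
            (fderiv ℝ (Function.uncurry g) (p.1, p.2.1)).le_opNorm _
        _ ≤ C * (1 + ‖p.2.2‖) := by
            refine mul_le_mul (hC _) ?_ (norm_nonneg _) (le_max_right _ _)
            rw [Prod.norm_def]
            simp only [norm_one]
            refine max_le (by nlinarith [norm_nonneg p.2.2]) (by nlinarith)
    have hfcont : Continuous f := by
      have h1 : Continuous fun p : ℝ × E × E => fderiv ℝ (Function.uncurry g) (p.1, p.2.1) :=
        (hG.continuous_fderiv (by simp)).comp (continuous_fst.prodMk continuous_snd.fst)
      exact h1.clm_apply (continuous_const.prodMk continuous_snd.snd)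
    have hint_bound : Integrable (fun p : ℝ × E × E => C * (1 + ‖p.2.2‖)) η :=
      ((integrable_const 1).add hY.2.2).const_mul C
    have hCpos : (0 : ℝ) ≤ C := le_max_right _ _
    have hintf : Integrable f η := by
      refine hint_bound.mono hfcont.aestronglyMeasurable (Eventually.of_forall fun p => ?_)
      have h1 : (0 : ℝ) ≤ C * (1 + ‖p.2.2‖) := by positivity
      rw [Real.norm_eq_abs (C * _), abs_of_nonneg h1]
      exact hbound p
    have hintf2 : Integrable (fun r : (ℝ × E) × E => f (r.1.1, r.1.2, r.2)) (μ ⊗ₘ κ) := by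
      have h2 := hintf
      rw [hη2] at h2
      exact (integrable_map_measure hfcont.aestronglyMeasurable hψ.aemeasurable).mp h2
    have inner_eq : ∀ᵐ q ∂μ,
        (∫ v, f (q.1, q.2, v) ∂κ q)
          = deriv (fun s => g s q.2) q.1 + fderiv ℝ (fun y => g q.1 y) q.2 (V q) := by
      filter_upwards [hKae] with q hq
      haveI := hKprob q
      rw [tIntegrand_eq hG q.1 q.2 (V q)]
      set L := fderiv ℝ (Function.uncurry g) (q.1, q.2) with hLdef
      set T : E →L[ℝ] ℝ :=
        L.comp (((0 : E →L[ℝ] ℝ)).prod (ContinuousLinearMap.id ℝ E)) with hTdef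
      have hsplit : ∀ v : E, L ((1 : ℝ), v) = L ((1 : ℝ), (0 : E)) + T v := by
        intro v
        rw [hTdef]
        simp only [ContinuousLinearMap.comp_apply, ContinuousLinearMap.prod_apply,
          ContinuousLinearMap.zero_apply, ContinuousLinearMap.id_apply, ← map_add]
        norm_num
      have hfv : ∀ v : E, f (q.1, q.2, v) = L ((1 : ℝ), (0 : E)) + T v := by
        intro v
        rw [hfdef, ← hsplit v]
      have hTint : Integrable (fun v => T v) (K q) := T.integrable_comp hq
      calc (∫ v, f (q.1, q.2, v) ∂κ q)
          = ∫ v, (L ((1 : ℝ), (0 : E)) + T v) ∂(K q) := by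
            refine integral_congr_ae (Eventually.of_forall fun v => ?_)
            exact hfv v
        _ = L ((1 : ℝ), (0 : E)) + T (V q) := by
            rw [integral_add (integrable_const _) hTint, integral_const, probReal_univ,
              one_smul, T.integral_comp_comm hq, hV q]
        _ = L ((1 : ℝ), V q) := (hsplit (V q)).symm
    calc ∫ p, tIntegrand g p ∂η = ∫ p, f p ∂η := by
          refine integral_congr_ae (Eventually.of_forall fun p => hti p)
      _ = ∫ r : (ℝ × E) × E, f (r.1.1, r.1.2, r.2) ∂(μ ⊗ₘ κ) := by
          rw [hη2]
          exact integral_map hψ.aemeasurable hfcont.aestronglyMeasurable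
      _ = ∫ q, ∫ v, f (q.1, q.2, v) ∂κ q ∂μ := Measure.integral_compProd hintf2
      _ = ∫ q, (deriv (fun s => g s q.2) q.1
            + fderiv ℝ (fun y => g q.1 y) q.2 (V q)) ∂μ := integral_congr_ae inner_eq
  constructor
  · rintro ⟨-, hT⟩ g hg
    rw [← main g hg]
    exact hT g hg
  · intro h
    exact ⟨hY, fun g hg => (main g hg).trans (h g hg)⟩
end
end
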